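/- Reading order independence (Theorem 2.2): Let λ ⊆ ν and μ be partitions and let T be an edge-labeled tableau of shape ν/λ and content μ. Then the column reading word w_c(T) is lattice if and only if the row reading word w_r(T) is lattice. -/

import Mathlib

/-!
Common definitions: partitions, edge-labeled tableaux (Thomas–Yong), reading
words, the polytope conditions (A)–(F), plus diagrams and (factorial) Schur
polynomials, following Adve–Robichaux–Yong,
"Vanishing of Littlewood-Richardson polynomials is in P".
-/

/-- A partition: a weakly decreasing, eventually-zero sequence of natural numbers.
Internally `toFun` is 0-indexed: `toFun (i-1)` is the `i`-th part `λ_i`. -/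
structure SkewPartition where
  toFun : ℕ → ℕ
  antitone' : ∀ ⦃i j : ℕ⦄, i ≤ j → toFun j ≤ toFun i
  eventually_zero' : ∃ N, ∀ i, N ≤ i → toFun i = 0

namespace SkewPartition

/-- The `i`-th part `λ_i` (1-indexed: `part 1` is the first part). -/
def part (p : SkewPartition) (i : ℕ) : ℕ := p.toFun (i - 1)

/-- `ℓ(λ)`: the number of nonzero parts. -/
noncomputable def len (p : SkewPartition) : ℕ := Set.ncard {i : ℕ | p.toFun i ≠ 0}

/-- `|λ| = Σ_i λ_i`. -/
noncomputable def size (p : SkewPartition) : ℕ := ∑ᶠ i, p.toFun i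

/-- The dilated partition `Nλ = (Nλ_1, Nλ_2, …)`. -/
def smul (N : ℕ) (p : SkewPartition) : SkewPartition where
  toFun i := N * p.toFun i
  antitone' _ _ h := Nat.mul_le_mul le_rfl (p.antitone' h)
  eventually_zero' := by
    obtain ⟨M, hM⟩ := p.eventually_zero'
    exact ⟨M, fun i hi => by show N * p.toFun i = 0; rw [hM i hi, Nat.mul_zero]⟩

/-- `λ ⊆ ν`, i.e. `λ_i ≤ ν_i` for all `i`. -/
def Subset (lam nu : SkewPartition) : Prop := ∀ i, lam.part i ≤ nu.part i

end SkewPartition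

/-- `(i,j)` (1-indexed, matrix convention) is a box of the skew shape `ν/λ`,
i.e. `λ_i < j ≤ ν_i`. -/
def IsBox (lam nu : SkewPartition) (i j : ℕ) : Prop :=
  1 ≤ i ∧ lam.part i < j ∧ j ≤ nu.part i

instance (lam nu : SkewPartition) (i j : ℕ) : Decidable (IsBox lam nu i j) :=
  inferInstanceAs (Decidable (_ ∧ _ ∧ _))

/-- `(i+1/2, j)` is a horizontal edge position of the skew shape `ν/λ`:
`1 ≤ j ≤ ν_i` and `j > λ_{i+1}`. -/
def IsEdge (lam nu : SkewPartition) (i j : ℕ) : Prop :=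
  1 ≤ i ∧ 1 ≤ j ∧ j ≤ nu.part i ∧ lam.part (i + 1) < j

/-- An edge-labeled tableau of shape `ν/λ` and content `μ` (Thomas–Yong).
`box i j` is the label of box `(i,j)` (`0` outside the shape), and
`edge i j` is the finite set of labels on the edge `(i+1/2, j)`
(empty outside the shape). All labels are positive integers. -/
structure EdgeTableau (lam mu nu : SkewPartition) where
  subset : SkewPartition.Subset lam nu
  box : ℕ → ℕ → ℕ
  edge : ℕ → ℕ → Finset ℕ
  box_pos : ∀ i j, IsBox lam nu i j → 1 ≤ box i j
  box_eq_zero : ∀ i j, ¬ IsBox lam nu i j → box i j = 0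
  edge_pos : ∀ i j, ∀ e ∈ edge i j, 1 ≤ e
  edge_eq_empty : ∀ i j, ¬ IsEdge lam nu i j → edge i j = ∅
  row_weak : ∀ i j, IsBox lam nu i j → IsBox lam nu i (j+1) → box i j ≤ box i (j+1)
  col_strict : ∀ i j, IsBox lam nu i j → IsBox lam nu (i+1) j → box i j < box (i+1) j
  edge_gt_box : ∀ i j, IsBox lam nu i j → ∀ e ∈ edge i j, box i j < e
  edge_lt_box : ∀ i j, IsBox lam nu (i+1) j → ∀ e ∈ edge i j, e < box (i+1) j
  not_too_high : ∀ i j, ∀ e ∈ edge i j, e ≤ i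
  content : ∀ k, 1 ≤ k →
    Set.ncard {q : ℕ × ℕ | box q.1 q.2 = k} + Set.ncard {q : ℕ × ℕ | k ∈ edge q.1 q.2}
      = mu.part k

namespace EdgeTableau

variable {lam mu nu : SkewPartition}

/-- The (one-letter or empty) word contributed by the box `(i,j)`. -/
def boxWord (T : EdgeTableau lam mu nu) (i j : ℕ) : List ℕ :=
  if IsBox lam nu i j then [T.box i j] else []

/-- The word contributed by the edge `(i+1/2, j)`, read in increasing order. -/
def edgeWord (T : EdgeTableau lam mu nu) (i j : ℕ) : List ℕ :=
  (T.edge i j).sort (· ≤ ·)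

/-- The column reading word `w_c(T)`: columns right to left, each column top to
bottom, alternating the box label of row `i` with the edge set of row `i+1/2`. -/
noncomputable def wc (T : EdgeTableau lam mu nu) : List ℕ :=
  ((List.range (nu.part 1)).reverse).flatMap fun j0 =>
    (List.range nu.len).flatMap fun i0 =>
      T.boxWord (i0+1) (j0+1) ++ T.edgeWord (i0+1) (j0+1)

/-- The row reading word `w_r(T)`: for `i = 1, 2, …`, the boxes of row `i`
right to left, then the edge sets of row `i+1/2` right to left. -/
noncomputable def wr (T : EdgeTableau lam mu nu) : List ℕ :=
  (List.range nu.len).flatMap fun i0 =>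
    (((List.range (nu.part 1)).reverse).flatMap fun j0 => T.boxWord (i0+1) (j0+1)) ++
    (((List.range (nu.part 1)).reverse).flatMap fun j0 => T.edgeWord (i0+1) (j0+1))

end EdgeTableau

/-- A word is lattice if, for every `k ≥ 1`, every prefix contains at least as
many letters `k` as letters `k+1`. -/
def IsLatticeWord (w : List ℕ) : Prop :=
  ∀ k, 1 ≤ k → ∀ t, (w.take t).count (k+1) ≤ (w.take t).count k

/-- `EdgeTab(λ,μ,ν)`: edge-labeled tableaux of shape `ν/λ` and content `μ`
whose column reading word is lattice. -/
def EdgeTab (lam mu nu : SkewPartition) : Set (EdgeTableau lam mu nu) :=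
  {T | IsLatticeWord T.wc}

/-! ### Positions and reading-order prefixes -/

/-- A (horizontal) position of a tableau: a box `(i,j)` or an edge `(i+1/2, j)`. -/
inductive HPos
  | box (i j : ℕ)
  | edge (i j : ℕ)

namespace HPos

/-- Twice the (half-integer) row index: `2i` for a box in row `i`,
`2i+1` for an edge in row `i+1/2`. -/
def rowIdx : HPos → ℕ
  | .box i _ => 2 * i
  | .edge i _ => 2 * i + 1

/-- The column of a position. -/
def col : HPos → ℕ
  | .box _ j => j
  | .edge _ j => j

/-- `p` is weakly northeast of `q`: weakly above and weakly to the right. -/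
def NorthEastOf (p q : HPos) : Prop := p.rowIdx ≤ q.rowIdx ∧ q.col ≤ p.col

/-- `p` is read no later than `q` in the column reading order (columns right to
left, each column top to bottom); equivalently, every label at `p` is read by
the prefix `w_c|_q` of the column reading word ending after position `q`. -/
def colLE (p q : HPos) : Prop := q.col < p.col ∨ (p.col = q.col ∧ p.rowIdx ≤ q.rowIdx)

/-- `p` is read no later than `q` in the row reading order (rows top to bottom,
each row right to left); equivalently, every label at `p` is read by the
prefix `w_r|_q` of the row reading word ending after position `q`. -/
def rowLE (p q : HPos) : Prop := p.rowIdx < q.rowIdx ∨ (p.rowIdx = q.rowIdx ∧ q.col ≤ p.col)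

end HPos

/-- `p` is a valid (box or edge) position of the skew shape `ν/λ`. -/
def IsPos (lam nu : SkewPartition) : HPos → Prop
  | .box i j => IsBox lam nu i j
  | .edge i j => IsEdge lam nu i j

/-- The tableau `T` carries the label `ℓ` at the position `p`. -/
def EdgeTableau.HasLabel {lam mu nu : SkewPartition} (T : EdgeTableau lam mu nu) :
    HPos → ℕ → Prop
  | .box i j, ℓ => IsBox lam nu i j ∧ T.box i j = ℓ
  | .edge i j, ℓ => ℓ ∈ T.edge i j

/-! ### The statistics `r_k^i(T)`, `r_k^{i+1/2}(T)` and conditions (A)–(F) -/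

/-- `r_k^i(T)`: the number of box labels `k` in row `i` of `T`. -/
noncomputable def EdgeTableau.rbox {lam mu nu : SkewPartition} (T : EdgeTableau lam mu nu)
    (k i : ℕ) : ℕ :=
  Set.ncard {j : ℕ | IsBox lam nu i j ∧ T.box i j = k}

/-- `r_k^{i+1/2}(T)`: the number of edge labels `k` on the edges `(i+1/2, j)` of `T`. -/
noncomputable def EdgeTableau.redge {lam mu nu : SkewPartition} (T : EdgeTableau lam mu nu)
    (k i : ℕ) : ℕ :=
  Set.ncard {j : ℕ | k ∈ T.edge i j}

open Finset in
/-- Conditions (A)–(F) of Adve–Robichaux–Yong for the triple `(λ,μ,ν)` on the real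
tuple `(r_k^i, r_k^{i+1/2})_{1 ≤ k ≤ ℓ(μ), 1 ≤ i ≤ ℓ(ν)}`, encoded as a pair of
functions `rb re : ℕ → ℕ → ℝ` (`rb k i = r_k^i`, `re k i = r_k^{i+1/2}`) that
vanish outside the index range (which also encodes the paper's conventions
`r_{ℓ(μ)+1}^i = r_{ℓ(μ)+1}^{i+1/2} = 0` and `r_k^{ℓ(ν)+1} = 0`).
Membership in the polytope `P(λ,μ,ν)` is exactly this predicate. -/
def SatisfiesAF (lam mu nu : SkewPartition) (rb re : ℕ → ℕ → ℝ) : Prop :=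
  -- the tuple is indexed by `1 ≤ k ≤ ℓ(μ)`, `1 ≤ i ≤ ℓ(ν)`; it vanishes elsewhere
  (∀ k i, ¬(1 ≤ k ∧ k ≤ mu.len ∧ 1 ≤ i ∧ i ≤ nu.len) → rb k i = 0 ∧ re k i = 0) ∧
  -- (A) nonnegativity
  (∀ k i, 0 ≤ rb k i ∧ 0 ≤ re k i) ∧
  -- (B) shape constraints
  (∀ i, 1 ≤ i → (lam.part i : ℝ) + ∑ k ∈ Icc 1 mu.len, rb k i = (nu.part i : ℝ)) ∧
  -- (C) content constraints
  (∀ k, 1 ≤ k → ∑ i ∈ Icc 1 nu.len, (rb k i + re k i) = (mu.part k : ℝ)) ∧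
  -- (D) gap constraints
  (∀ k i, 1 ≤ k → k ≤ mu.len → 1 ≤ i → i ≤ nu.len →
    re k i ≤ ((lam.part i : ℝ) + ∑ k' ∈ Ico 1 k, rb k' i)
      - ((lam.part (i+1) : ℝ) + ∑ k' ∈ Icc 1 k, rb k' (i+1))) ∧
  -- (E) no label is too high
  (∀ k i, i < k → rb k i = 0 ∧ re k i = 0) ∧
  -- (F) reverse lattice word constraints
  (∀ k i, 1 ≤ k → k ≤ mu.len → 1 ≤ i → i ≤ nu.len →
    rb (k+1) i + ∑ i' ∈ Ico 1 i, (rb (k+1) i' + re (k+1) i')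
      ≤ ∑ i' ∈ Ico 1 i, (rb k i' + re k i'))

/-! ### Plus diagrams and (factorial) Schur polynomials -/

/-- The initial diagram of `λ` in the `n`-row grid: a `+` in each position
`(i,j)` with `1 ≤ i ≤ n`, `1 ≤ j ≤ λ_i`. -/
def initialDiagram (n : ℕ) (lam : SkewPartition) : Finset (ℕ × ℕ) :=
  (Finset.Icc 1 n ×ˢ Finset.Icc 1 (lam.part 1)).filter fun q => q.2 ≤ lam.part q.1

/-- A local move in the `n × m` grid: a `+` at `(i,j)` moves to `(i+1,j+1)`,
provided `(i+1,j+1)` lies in the grid and `(i,j+1)`, `(i+1,j)`, `(i+1,j+1)`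
carry no `+`. -/
def IsLocalMove (n m : ℕ) (P Q : Finset (ℕ × ℕ)) : Prop :=
  ∃ i j, (i, j) ∈ P ∧ i + 1 ≤ n ∧ j + 1 ≤ m ∧
    (i, j+1) ∉ P ∧ (i+1, j) ∉ P ∧ (i+1, j+1) ∉ P ∧
    Q = insert (i+1, j+1) (P.erase (i, j))

/-- `Plus(λ)`: all configurations obtainable from the initial diagram of `λ`
in the `n × m` grid by finite sequences of local moves. -/
def PlusSet (n m : ℕ) (lam : SkewPartition) : Set (Finset (ℕ × ℕ)) :=
  {P | Relation.ReflTransGen (IsLocalMove n m) (initialDiagram n lam) P}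

open MvPolynomial in
/-- `wt_{x,y}(P) = ∏_{(i,j) ∈ P} (x_i - y_j)`, in `ℤ[x_1, x_2, …, y_1, y_2, …]`
(the variable `Sum.inl i` is `x_i`, and `Sum.inr j` is `y_j`). -/
noncomputable def wtxy (P : Finset (ℕ × ℕ)) : MvPolynomial (ℕ ⊕ ℕ) ℤ :=
  ∏ q ∈ P, (X (Sum.inl q.1) - X (Sum.inr q.2))

open MvPolynomial in
/-- `wt_x(P) = ∏_i x_i^{a_i(P)}`, where `a_i(P)` is the number of `+`'s in row `i`. -/
noncomputable def wtx (P : Finset (ℕ × ℕ)) : MvPolynomial (ℕ ⊕ ℕ) ℤ :=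
  ∏ q ∈ P, X (Sum.inl q.1)

/-- The factorial Schur polynomial `s_λ(X;Y) = Σ_{P ∈ Plus(λ)} wt_{x,y}(P)`
(computed in the `n × m` grid). -/
noncomputable def factorialSchur (n m : ℕ) (lam : SkewPartition) : MvPolynomial (ℕ ⊕ ℕ) ℤ :=
  ∑ᶠ P ∈ PlusSet n m lam, wtxy P

/-- The Schur polynomial `s_λ(X) = Σ_{P ∈ Plus(λ)} wt_x(P)`
(computed in the `n × m` grid). -/
noncomputable def schurPoly (n m : ℕ) (lam : SkewPartition) : MvPolynomial (ℕ ⊕ ℕ) ℤ :=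
  ∑ᶠ P ∈ PlusSet n m lam, wtx P

open MvPolynomial in
/-- The substitution `y_j = 0` for all `j` (keeping the `x`-variables). -/
noncomputable def setYtoZero : MvPolynomial (ℕ ⊕ ℕ) ℤ →+* MvPolynomial (ℕ ⊕ ℕ) ℤ :=
  (aeval (Sum.elim (fun i => (X (Sum.inl i) : MvPolynomial (ℕ ⊕ ℕ) ℤ)) fun _ => 0)).toRingHom

open MvPolynomial in
/-- Interpret a polynomial in `ℤ[y_1, y_2, …]` inside `ℤ[x_1, …, y_1, …]`. -/
noncomputable def yPoly (p : MvPolynomial ℕ ℤ) : MvPolynomial (ℕ ⊕ ℕ) ℤ :=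
  rename Sum.inr p

/-! ### Auxiliary development for Theorem 2.2 -/

deriving instance DecidableEq for HPos

instance (lam nu : SkewPartition) (i j : ℕ) : Decidable (IsEdge lam nu i j) :=
  inferInstanceAs (Decidable (_ ∧ _ ∧ _ ∧ _))

namespace SkewPartition

lemma part_antitone (p : SkewPartition) {i j : ℕ} (h : i ≤ j) : p.part j ≤ p.part i :=
  p.antitone' (Nat.sub_le_sub_right h 1)

lemma le_len (p : SkewPartition) {i : ℕ} (h : 1 ≤ p.part i) : i ≤ p.len := by
  obtain ⟨B, hB⟩ := p.eventually_zero'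
  have hfin : {j : ℕ | p.toFun j ≠ 0}.Finite := by
    apply Set.Finite.subset (Set.finite_Iio B)
    intro j hj
    by_contra hlt
    exact hj (hB j (by simpa [Set.mem_Iio] using hlt))
  have hsub : (↑(Finset.range i) : Set ℕ) ⊆ {j : ℕ | p.toFun j ≠ 0} := by
    intro j hj
    simp only [Finset.coe_range, Set.mem_Iio] at hj
    have : p.toFun (i - 1) ≤ p.toFun j := p.antitone' (by omega)
    have hpos : 0 < p.toFun (i - 1) := h
    simp only [Set.mem_setOf_eq]
    omega
  have hle := Set.ncard_le_ncard hsub hfin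
  rw [Set.ncard_coe_finset, Finset.card_range] at hle
  exact hle

end SkewPartition

section Structural

variable {lam mu nu : SkewPartition} (T : EdgeTableau lam mu nu)

lemma IsBox.one_le_col {i j : ℕ} (h : IsBox lam nu i j) : 1 ≤ j := by
  obtain ⟨-, h1, -⟩ := h; omega

lemma IsEdge.isBox_self {i j : ℕ} (h : IsEdge lam nu i j) (hl : lam.part i < j) :
    IsBox lam nu i j := ⟨h.1, hl, h.2.2.1⟩

/-- Weak increase along a row between any two boxes. -/
lemma box_row_mono {i j j' : ℕ} (h1 : IsBox lam nu i j) (h2 : IsBox lam nu i j')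
    (hj : j ≤ j') : T.box i j ≤ T.box i j' := by
  obtain ⟨d, rfl⟩ := Nat.exists_eq_add_of_le hj
  clear hj
  induction d with
  | zero => exact le_refl _
  | succ d ih =>
    have h2' : IsBox lam nu i (j + d + 1) := by
      have := h2.1; have := h2.2.1; have := h2.2.2
      exact ⟨h2.1, by omega, by omega⟩
    have hmid : IsBox lam nu i (j + d) := by
      have := h1.2.1; have := h2'.2.2
      exact ⟨h1.1, by omega, by omega⟩
    have step := T.row_weak i (j + d) hmid h2'
    have hih := ih hmid
    have : j + (d + 1) = j + d + 1 := by omega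
    rw [this]
    omega

/-- Strict increase down a column between any two boxes. -/
lemma box_col_strict {i i' j : ℕ} (h1 : IsBox lam nu i j) (h2 : IsBox lam nu i' j)
    (hi : i < i') : T.box i j < T.box i' j := by
  obtain ⟨d, hd⟩ := Nat.exists_eq_add_of_le (Nat.succ_le_of_lt hi)
  subst hd
  clear hi
  induction d with
  | zero => exact T.col_strict i j h1 h2
  | succ d ih =>
    have h2' : IsBox lam nu (i + 1 + d + 1) j := by
      have : i + 1 + (d + 1) = i + 1 + d + 1 := by omega
      rwa [← this]
    have hmid : IsBox lam nu (i + 1 + d) j := by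
      refine ⟨by omega, ?_, ?_⟩
      · exact lt_of_le_of_lt (lam.part_antitone (by omega)) h1.2.1
      · exact le_trans h2'.2.2 (nu.part_antitone (by omega))
    have step := T.col_strict (i + 1 + d) j hmid h2'
    have hih := ih hmid
    simp only [Nat.succ_eq_add_one] at hih
    have : i + 1 + (d + 1) = i + 1 + d + 1 := by omega
    rw [this]
    omega

lemma box_col_mono {i i' j : ℕ} (h1 : IsBox lam nu i j) (h2 : IsBox lam nu i' j)
    (hi : i ≤ i') : T.box i j ≤ T.box i' j := by
  rcases eq_or_lt_of_le hi with rfl | h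
  · exact le_refl _
  · exact le_of_lt (box_col_strict T h1 h2 h)

lemma hasLabel_valid {p : HPos} {v : ℕ} (h : T.HasLabel p v) : IsPos lam nu p := by
  cases p with
  | box i j => exact h.1
  | edge i j =>
    by_contra hne
    have := T.edge_eq_empty i j hne
    simp only [EdgeTableau.HasLabel, this] at h
    exact absurd h (Finset.notMem_empty v)

end Structural
section Structural2

variable {lam mu nu : SkewPartition} (T : EdgeTableau lam mu nu)

/-- Key structural lemma: a label strictly southeast of another is strictly bigger
(southeast meaning weakly east and strictly south here). -/
lemma label_lt_of_SE {p q : HPos} {v v' : ℕ} (hp : T.HasLabel p v) (hq : T.HasLabel q v')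
    (hcol : p.col ≤ q.col) (hrow : p.rowIdx < q.rowIdx) : v < v' := by
  cases p with
  | box i j =>
    obtain ⟨hbp, rfl⟩ := hp
    cases q with
    | box i' j' =>
      obtain ⟨hbq, rfl⟩ := hq
      simp only [HPos.col, HPos.rowIdx] at hcol hrow
      have hii : i < i' := by omega
      have hbij' : IsBox lam nu i j' :=
        ⟨hbp.1, by have := hbp.2.1; omega, le_trans hbq.2.2 (nu.part_antitone hii.le)⟩
      exact lt_of_le_of_lt (box_row_mono T hbp hbij' hcol) (box_col_strict T hbij' hbq hii)
    | edge i' j' =>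
      have hEq : IsEdge lam nu i' j' := hasLabel_valid T hq
      simp only [HPos.col, HPos.rowIdx] at hcol hrow
      have hii : i ≤ i' := by omega
      have hbq' : IsBox lam nu i' j' :=
        ⟨hEq.1, lt_of_le_of_lt (lam.part_antitone hii) (by have := hbp.2.1; omega),
          hEq.2.2.1⟩
      have hbij' : IsBox lam nu i j' :=
        ⟨hbp.1, by have := hbp.2.1; omega, le_trans hEq.2.2.1 (nu.part_antitone hii)⟩
      have h1 := box_row_mono T hbp hbij' hcol
      have h2 := box_col_mono T hbij' hbq' hii
      have h3 := T.edge_gt_box i' j' hbq' v' hq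
      omega
  | edge i j =>
    have hEp : IsEdge lam nu i j := hasLabel_valid T hp
    cases q with
    | box i' j' =>
      obtain ⟨hbq, rfl⟩ := hq
      simp only [HPos.col, HPos.rowIdx] at hcol hrow
      have hii : i + 1 ≤ i' := by omega
      have hb1 : IsBox lam nu (i+1) j :=
        ⟨by omega, hEp.2.2.2, le_trans (le_trans hcol hbq.2.2) (nu.part_antitone hii)⟩
      have hb1' : IsBox lam nu (i+1) j' :=
        ⟨by omega, by have := hEp.2.2.2; omega, le_trans hbq.2.2 (nu.part_antitone hii)⟩
      have h1 := T.edge_lt_box i j hb1 v hp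
      have h2 := box_row_mono T hb1 hb1' hcol
      have h3 := box_col_mono T hb1' hbq hii
      omega
    | edge i' j' =>
      have hEq : IsEdge lam nu i' j' := hasLabel_valid T hq
      simp only [HPos.col, HPos.rowIdx] at hcol hrow
      have hii : i + 1 ≤ i' := by omega
      have hb1 : IsBox lam nu (i+1) j :=
        ⟨by omega, hEp.2.2.2,
          le_trans (le_trans hcol hEq.2.2.1) (nu.part_antitone hii)⟩
      have hb1' : IsBox lam nu (i+1) j' :=
        ⟨by omega, by have := hEp.2.2.2; omega,
          le_trans hEq.2.2.1 (nu.part_antitone hii)⟩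
      have hbq' : IsBox lam nu i' j' :=
        ⟨hEq.1, lt_of_le_of_lt (lam.part_antitone hii) (by have := hEp.2.2.2; omega),
          hEq.2.2.1⟩
      have h1 := T.edge_lt_box i j hb1 v hp
      have h2 := box_row_mono T hb1 hb1' hcol
      have h3 := box_col_mono T hb1' hbq' hii
      have h4 := T.edge_gt_box i' j' hbq' v' hq
      omega

/-- Staircase: a weakly smaller label weakly east of `p` is weakly north of `p`. -/
lemma staircase {p q : HPos} {v v' : ℕ} (hp : T.HasLabel p v) (hq : T.HasLabel q v')
    (hv : v' ≤ v) (hcol : p.col ≤ q.col) : q.rowIdx ≤ p.rowIdx := by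
  by_contra h
  have := label_lt_of_SE T hp hq hcol (by omega)
  omega

lemma HPos.eq_of_idx {p q : HPos} (h1 : p.rowIdx = q.rowIdx) (h2 : p.col = q.col) :
    p = q := by
  cases p <;> cases q <;>
    simp only [HPos.rowIdx, HPos.col] at h1 h2 <;>
    first
      | (obtain rfl : _ = _ := h2; congr 1; omega)
      | omega

lemma label_unique_col {p q : HPos} {v : ℕ} (hp : T.HasLabel p v) (hq : T.HasLabel q v)
    (h : p.col = q.col) : p = q := by
  rcases lt_trichotomy p.rowIdx q.rowIdx with h1 | h1 | h1
  · exact absurd (label_lt_of_SE T hp hq h.le h1) (lt_irrefl v)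
  · exact HPos.eq_of_idx h1 h
  · exact absurd (label_lt_of_SE T hq hp h.ge h1) (lt_irrefl v)

end Structural2
section Classification

variable {lam mu nu : SkewPartition} (T : EdgeTableau lam mu nu)

/-- Classification of a `k` strictly northwest of a `k+1`, when the column of the
`k+1` contains no `k`: the `k` is an edge label just above the row of the `k+1`
(which is a box), and the whole row segment between them consists of `k+1`'s. -/
lemma nw_classification {q x : HPos} {k : ℕ}
    (hq : T.HasLabel q (k+1)) (hx : T.HasLabel x k)
    (hcol : x.col < q.col) (hrow : x.rowIdx < q.rowIdx)
    (hnone : ∀ z, T.HasLabel z k → z.col ≠ q.col) :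
    ∃ i₁, x = HPos.edge i₁ x.col ∧ q = HPos.box (i₁+1) q.col ∧
      ∀ d, x.col ≤ d → d ≤ q.col → IsBox lam nu (i₁+1) d ∧ T.box (i₁+1) d = k+1 := by
  cases x with
  | box i₁ c' =>
    obtain ⟨hbx, hbxv⟩ := hx
    exfalso
    cases q with
    | box i₂ c =>
      obtain ⟨hbq, hbqv⟩ := hq
      simp only [HPos.col, HPos.rowIdx] at hcol hrow
      have hii : i₁ < i₂ := by omega
      have hbic : IsBox lam nu i₁ c :=
        ⟨hbx.1, by have := hbx.2.1; omega, le_trans hbq.2.2 (nu.part_antitone hii.le)⟩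
      have h1 := box_row_mono T hbx hbic hcol.le
      have h2 := box_col_strict T hbic hbq hii
      have hlab : T.HasLabel (HPos.box i₁ c) k := ⟨hbic, by omega⟩
      exact hnone _ hlab rfl
    | edge i₂ c =>
      have hEq : IsEdge lam nu i₂ c := hasLabel_valid T hq
      simp only [HPos.col, HPos.rowIdx] at hcol hrow
      have hii : i₁ ≤ i₂ := by omega
      have hbic : IsBox lam nu i₁ c :=
        ⟨hbx.1, by have := hbx.2.1; omega, le_trans hEq.2.2.1 (nu.part_antitone hii)⟩
      have hbq' : IsBox lam nu i₂ c :=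
        ⟨hEq.1, lt_of_le_of_lt (lam.part_antitone hii) hbic.2.1, hEq.2.2.1⟩
      have h1 := box_row_mono T hbx hbic hcol.le
      have h2 := box_col_mono T hbic hbq' hii
      have h3 := T.edge_gt_box i₂ c hbq' _ hq
      have hlab : T.HasLabel (HPos.box i₂ c) k := ⟨hbq', by omega⟩
      exact hnone _ hlab rfl
  | edge i₁ c' =>
    have hEx : IsEdge lam nu i₁ c' := hasLabel_valid T hx
    cases q with
    | box i₂ c =>
      obtain ⟨hbq, hbqv⟩ := hq
      simp only [HPos.col, HPos.rowIdx] at hcol hrow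
      have hii : i₁ + 1 ≤ i₂ := by omega
      have hb1' : IsBox lam nu (i₁+1) c' :=
        ⟨by omega, hEx.2.2.2, le_trans (le_trans hcol.le hbq.2.2) (nu.part_antitone hii)⟩
      have hk1 := T.edge_lt_box i₁ c' hb1' _ hx
      rcases eq_or_lt_of_le hii with heq | hlt
      · subst heq
        refine ⟨i₁, rfl, rfl, fun d hd1 hd2 => ?_⟩
        simp only [HPos.col] at hd1 hd2
        have hbd : IsBox lam nu (i₁+1) d :=
          ⟨by omega, by have := hEx.2.2.2; omega, le_trans hd2 hbq.2.2⟩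
        have h1 := box_row_mono T hb1' hbd hd1
        have h2 := box_row_mono T hbd hbq hd2
        exact ⟨hbd, by omega⟩
      · exfalso
        have hb1c : IsBox lam nu (i₁+1) c :=
          ⟨by omega, by have := hEx.2.2.2; omega, le_trans hbq.2.2 (nu.part_antitone hii)⟩
        have h1 := box_row_mono T hb1' hb1c hcol.le
        have h2 := box_col_strict T hb1c hbq hlt
        omega
    | edge i₂ c =>
      exfalso
      have hEq : IsEdge lam nu i₂ c := hasLabel_valid T hq
      simp only [HPos.col, HPos.rowIdx] at hcol hrow
      have hii : i₁ + 1 ≤ i₂ := by omega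
      have hb1' : IsBox lam nu (i₁+1) c' :=
        ⟨by omega, hEx.2.2.2, le_trans (le_trans hcol.le hEq.2.2.1) (nu.part_antitone hii)⟩
      have hk1 := T.edge_lt_box i₁ c' hb1' _ hx
      have hb1c : IsBox lam nu (i₁+1) c :=
        ⟨by omega, by have := hEx.2.2.2; omega, le_trans hEq.2.2.1 (nu.part_antitone hii)⟩
      have hbq' : IsBox lam nu i₂ c :=
        ⟨hEq.1, lt_of_le_of_lt (lam.part_antitone hii) hb1c.2.1, hEq.2.2.1⟩
      have h1 := box_row_mono T hb1' hb1c hcol.le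
      have h2 := box_col_mono T hb1c hbq' hii
      have h3 := T.edge_gt_box i₂ c hbq' _ hq
      omega

end Classification

lemma lattice_pair_iff (w : List ℕ) (k : ℕ) :
    (∀ t, (w.take t).count (k+1) ≤ (w.take t).count k) ↔
    (∀ u v, w = u ++ (k+1) :: v → u.count (k+1) < u.count k) := by
  constructor
  · intro H u v h
    have h1 := H (u.length + 1)
    rw [h, List.take_append, List.take_of_length_le (by omega)] at h1
    have h2 : u.length + 1 - u.length = 1 := by omega
    rw [h2] at h1
    simp only [List.take_succ_cons, List.take_zero] at h1
    simp [List.count_append, List.count_singleton'] at h1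
    omega
  · intro H t
    induction t with
    | zero => simp
    | succ t ih =>
      by_cases ht : t < w.length
      · rw [List.take_succ, List.getElem?_eq_getElem ht]
        by_cases hx : w[t] = k + 1
        · have hsplit : w = w.take t ++ (k+1) :: w.drop (t+1) := by
            conv_lhs => rw [← List.take_append_drop t w]
            congr 1
            rw [List.drop_eq_getElem_cons ht, hx]
          have hlt := H _ _ hsplit
          rw [hx]
          simp only [Option.toList_some]
          simp [List.count_append, List.count_singleton']
          omega
        · simp only [Option.toList_some]
          simp only [List.count_append, List.count_singleton', hx, if_false]
          split <;> omega
      · rw [List.take_of_length_le (by omega), ← List.take_of_length_le (show w.length ≤ t by omega)]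
        exact ih

lemma flatMap_split {α : Type*} {L : List α} {f : α → List ℕ} {x : ℕ} {u v : List ℕ}
    (h : L.flatMap f = u ++ x :: v) :
    ∃ L₁ a L₂ u₂ v₂, L = L₁ ++ a :: L₂ ∧ f a = u₂ ++ x :: v₂ ∧ u = L₁.flatMap f ++ u₂ := by
  induction L generalizing u v with
  | nil => simp only [List.flatMap_nil] at h; exact absurd h.symm (by simp)
  | cons b L ih =>
    rw [List.flatMap_cons] at h
    rcases List.append_eq_append_iff.mp h with ⟨a', ha1, ha2⟩ | ⟨c', hc1, hc2⟩
    · obtain ⟨L₁, a, L₂, u₂, v₂, hL, hfa, hu⟩ := ih ha2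
      exact ⟨b :: L₁, a, L₂, u₂, v₂, by rw [hL]; rfl, hfa,
        by rw [ha1, hu, List.flatMap_cons, List.append_assoc]⟩
    · cases c' with
      | nil =>
        simp only [List.append_nil] at hc1
        have hc2' : L.flatMap f = [] ++ x :: v := by simpa using hc2.symm
        obtain ⟨L₁, a, L₂, u₂, v₂, hL, hfa, hu⟩ := ih hc2'
        refine ⟨b :: L₁, a, L₂, u₂, v₂, by rw [hL]; rfl, hfa, ?_⟩
        rw [List.flatMap_cons, List.append_assoc, ← hu, List.append_nil, hc1]
      | cons y c'' =>
        obtain ⟨rfl, rfl⟩ : x = y ∧ v = c'' ++ L.flatMap f := by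
          simp only [List.cons_append, List.cons.injEq] at hc2
          exact hc2
        exact ⟨[], b, L, u, c'', by simp, hc1, by simp⟩

lemma count_flatMap' {α : Type*} (L : List α) (f : α → List ℕ) (m : ℕ) :
    (L.flatMap f).count m = (L.map fun a => (f a).count m).sum := by
  induction L with
  | nil => simp
  | cons b L ih => simp [List.flatMap_cons, List.count_append, ih]

lemma sorted_cut {b u v : List ℕ} {x : ℕ} (hs : b.Pairwise (· < ·)) (h : b = u ++ x :: v) :
    (∀ y ∈ u, y < x) ∧ ∀ y ∈ v, x < y := by
  subst h
  rw [List.pairwise_append] at hs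
  obtain ⟨h1, h2, h3⟩ := hs
  exact ⟨fun y hy => h3 y hy x (List.mem_cons_self),
    fun y hy => (List.pairwise_cons.mp h2).1 y hy⟩

lemma pairwise_flatMap' {α β : Type*} {R : β → β → Prop} {S : α → α → Prop} {L : List α}
    {f : α → List β} (hL : L.Pairwise S) (hf : ∀ a ∈ L, (f a).Pairwise R)
    (hcross : ∀ a b, S a b → ∀ x ∈ f a, ∀ y ∈ f b, R x y) :
    (L.flatMap f).Pairwise R := by
  induction L with
  | nil => simp
  | cons b L ih =>
    rw [List.flatMap_cons, List.pairwise_append]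
    rw [List.pairwise_cons] at hL
    refine ⟨hf b (List.mem_cons_self), ih hL.2 (fun a ha => hf a (List.mem_cons_of_mem _ ha)), ?_⟩
    intro x hx y hy
    obtain ⟨a, haL, hya⟩ := List.mem_flatMap.mp hy
    exact hcross b a (hL.1 a haL) x hx y hya

lemma count_flat_nodup {α : Type*} [DecidableEq α] {L : List α} (hnd : L.Nodup)
    (f : α → List ℕ) (m : ℕ) (g : α → Prop) [DecidablePred g]
    (hcnt : ∀ a, (f a).count m = if g a then 1 else 0) :
    (L.flatMap f).count m = (L.toFinset.filter g).card := by
  rw [count_flatMap', ← List.sum_toFinset _ hnd, Finset.card_filter]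
  exact Finset.sum_congr rfl fun a _ => hcnt a
section GenericCards

lemma card_filter_split {α : Type*} (s : Finset α) (P Q : α → Prop)
    [DecidablePred P] [DecidablePred Q] :
    (s.filter P).card
      = (s.filter fun z => P z ∧ Q z).card + (s.filter fun z => P z ∧ ¬ Q z).card := by
  rw [← Finset.filter_filter, ← Finset.filter_filter]
  exact (Finset.card_filter_add_card_filter_not (s := s.filter P) (p := Q)).symm

lemma card_filter_or_disjoint {α : Type*} [DecidableEq α] (s : Finset α) (A B C : α → Prop)
    [DecidablePred A] [DecidablePred B] [DecidablePred C]
    (hd : ∀ z, B z → C z → False) :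
    (s.filter fun z => A z ∧ (B z ∨ C z)).card
      = (s.filter fun z => A z ∧ B z).card + (s.filter fun z => A z ∧ C z).card := by
  have h1 : (s.filter fun z => A z ∧ (B z ∨ C z))
      = (s.filter fun z => (A z ∧ B z) ∨ (A z ∧ C z)) := by
    apply Finset.filter_congr
    intro z _
    constructor
    · rintro ⟨h2, h3 | h3⟩
      · exact Or.inl ⟨h2, h3⟩
      · exact Or.inr ⟨h2, h3⟩
    · rintro (⟨h2, h3⟩ | ⟨h2, h3⟩)
      · exact ⟨h2, Or.inl h3⟩
      · exact ⟨h2, Or.inr h3⟩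
  rw [h1, Finset.filter_or, Finset.card_union_of_disjoint]
  rw [Finset.disjoint_left]
  intro z hz1 hz2
  simp only [Finset.mem_filter] at hz1 hz2
  exact hd z hz1.2.2 hz2.2.2

end GenericCards
section Words

variable {lam mu nu : SkewPartition} (T : EdgeTableau lam mu nu)

/-- The labels at a position, as a list (ordered increasingly). -/
def EdgeTableau.Wb (T : EdgeTableau lam mu nu) : HPos → List ℕ
  | .box i j => T.boxWord i j
  | .edge i j => T.edgeWord i j

instance hasLabelDecidable (m : ℕ) : ∀ p : HPos, Decidable (T.HasLabel p m)
  | .box i j => inferInstanceAs (Decidable (_ ∧ _))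
  | .edge i j => inferInstanceAs (Decidable (_ ∈ _))

lemma Wb_sorted (p : HPos) : (T.Wb p).Pairwise (· < ·) := by
  cases p with
  | box i j =>
    show (T.boxWord i j).Pairwise (· < ·)
    unfold EdgeTableau.boxWord
    split
    · exact List.pairwise_singleton _ _
    · exact List.Pairwise.nil
  | edge i j => exact List.sortedLT_iff_pairwise.mp (Finset.sortedLT_sort _)

lemma Wb_count (p : HPos) (m : ℕ) :
    (T.Wb p).count m = if T.HasLabel p m then 1 else 0 := by
  cases p with
  | box i j =>
    show (T.boxWord i j).count m = _
    unfold EdgeTableau.boxWord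
    by_cases hb : IsBox lam nu i j
    · rw [if_pos hb, List.count_singleton']
      by_cases hv : T.box i j = m
      · rw [if_pos hv, if_pos ⟨hb, hv⟩]
      · rw [if_neg hv, if_neg (fun h => hv h.2)]
    · rw [if_neg hb, List.count_nil, eq_comm]
      simp only [ite_eq_right_iff]
      intro h
      exact absurd h.1 hb
  | edge i j =>
    show (T.edgeWord i j).count m = if m ∈ T.edge i j then 1 else 0
    unfold EdgeTableau.edgeWord
    by_cases hm : m ∈ T.edge i j
    · rw [if_pos hm]
      exact List.count_eq_one_of_mem (Finset.sort_nodup _ _) (by simpa [Finset.mem_sort] using hm)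
    · rw [if_neg hm]
      exact List.count_eq_zero_of_not_mem (by simpa [Finset.mem_sort] using hm)

lemma Wb_mem (p : HPos) (m : ℕ) : m ∈ T.Wb p ↔ T.HasLabel p m := by
  rw [← List.count_pos_iff, Wb_count]
  split <;> simp_all

/-- The list of positions in column reading order. -/
def colPosList (N M : ℕ) : List HPos :=
  ((List.range M).reverse).flatMap fun j0 =>
    (List.range N).flatMap fun i0 => [HPos.box (i0+1) (j0+1), HPos.edge (i0+1) (j0+1)]

/-- The list of positions in row reading order. -/
def rowPosList (N M : ℕ) : List HPos :=
  (List.range N).flatMap fun i0 =>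
    (((List.range M).reverse).map fun j0 => HPos.box (i0+1) (j0+1)) ++
      ((List.range M).reverse).map fun j0 => HPos.edge (i0+1) (j0+1)

lemma wc_eq : T.wc = (colPosList nu.len (nu.part 1)).flatMap T.Wb := by
  simp only [EdgeTableau.wc, colPosList, List.flatMap_assoc, List.flatMap_cons,
    List.flatMap_nil, List.append_nil, EdgeTableau.Wb]

lemma wr_eq : T.wr = (rowPosList nu.len (nu.part 1)).flatMap T.Wb := by
  simp only [EdgeTableau.wr, rowPosList, List.flatMap_assoc, List.flatMap_append, List.flatMap_map,
    EdgeTableau.Wb]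

end Words
section Orders

/-- Strictly earlier in column reading order. -/
def colBef (p q : HPos) : Prop := q.col < p.col ∨ (p.col = q.col ∧ p.rowIdx < q.rowIdx)

/-- Strictly earlier in row reading order. -/
def rowBef (p q : HPos) : Prop := p.rowIdx < q.rowIdx ∨ (p.rowIdx = q.rowIdx ∧ q.col < p.col)

instance : DecidableRel colBef := fun _ _ => inferInstanceAs (Decidable (_ ∨ _))
instance : DecidableRel rowBef := fun _ _ => inferInstanceAs (Decidable (_ ∨ _))

lemma colBef_irrefl (p : HPos) : ¬ colBef p p := by unfold colBef; omega

lemma rowBef_irrefl (p : HPos) : ¬ rowBef p p := by unfold rowBef; omega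

lemma colBef_asymm {p q : HPos} : colBef p q → colBef q p → False := by unfold colBef; omega

lemma rowBef_asymm {p q : HPos} : rowBef p q → rowBef q p → False := by unfold rowBef; omega

/-- Position `p` lies in the `N × M` grid of boxes and edges. -/
def inGrid (N M : ℕ) (p : HPos) : Prop :=
  1 ≤ p.col ∧ p.col ≤ M ∧ 2 ≤ p.rowIdx ∧ p.rowIdx ≤ 2*N+1

lemma mem_colPosList {N M : ℕ} {p : HPos} : p ∈ colPosList N M ↔ inGrid N M p := by
  simp only [colPosList, List.mem_flatMap, List.mem_reverse, List.mem_range, List.mem_cons,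
    List.not_mem_nil, or_false]
  constructor
  · rintro ⟨j0, hj0, i0, hi0, (rfl | rfl)⟩ <;>
      simp only [inGrid, HPos.col, HPos.rowIdx] <;> omega
  · intro hg
    cases p with
    | box i j =>
      simp only [inGrid, HPos.col, HPos.rowIdx] at hg
      refine ⟨j - 1, by omega, i - 1, by omega, Or.inl ?_⟩
      have h1 : i - 1 + 1 = i := by omega
      have h2 : j - 1 + 1 = j := by omega
      rw [h1, h2]
    | edge i j =>
      simp only [inGrid, HPos.col, HPos.rowIdx] at hg
      refine ⟨j - 1, by omega, i - 1, by omega, Or.inr ?_⟩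
      have h1 : i - 1 + 1 = i := by omega
      have h2 : j - 1 + 1 = j := by omega
      rw [h1, h2]

lemma mem_rowPosList {N M : ℕ} {p : HPos} : p ∈ rowPosList N M ↔ inGrid N M p := by
  simp only [rowPosList, List.mem_flatMap, List.mem_append, List.mem_map, List.mem_reverse,
    List.mem_range]
  constructor
  · rintro ⟨i0, hi0, ⟨j0, hj0, rfl⟩ | ⟨j0, hj0, rfl⟩⟩ <;>
      simp only [inGrid, HPos.col, HPos.rowIdx] <;> omega
  · intro hg
    cases p with
    | box i j =>
      simp only [inGrid, HPos.col, HPos.rowIdx] at hg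
      refine ⟨i - 1, by omega, Or.inl ⟨j - 1, by omega, ?_⟩⟩
      have h1 : i - 1 + 1 = i := by omega
      have h2 : j - 1 + 1 = j := by omega
      rw [h1, h2]
    | edge i j =>
      simp only [inGrid, HPos.col, HPos.rowIdx] at hg
      refine ⟨i - 1, by omega, Or.inr ⟨j - 1, by omega, ?_⟩⟩
      have h1 : i - 1 + 1 = i := by omega
      have h2 : j - 1 + 1 = j := by omega
      rw [h1, h2]

lemma colPosList_pairwise (N M : ℕ) : (colPosList N M).Pairwise colBef := by
  refine pairwise_flatMap' (S := fun a b => b < a) ?_ ?_ ?_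
  · rw [List.pairwise_reverse]
    exact List.pairwise_lt_range (n := M)
  · intro j0 _
    refine pairwise_flatMap' (S := (· < ·)) (List.pairwise_lt_range (n := N)) ?_ ?_
    · intro i0 _
      refine List.pairwise_cons.mpr ⟨?_, List.pairwise_singleton _ _⟩
      intro y hy
      rw [List.mem_singleton] at hy
      subst hy
      exact Or.inr ⟨rfl, by simp only [HPos.rowIdx]; omega⟩
    · intro a b hab x hx y hy
      simp only [List.mem_cons, List.not_mem_nil, or_false] at hx hy
      rcases hx with rfl | rfl <;> rcases hy with rfl | rfl <;>
        exact Or.inr ⟨rfl, by simp only [HPos.rowIdx]; omega⟩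
  · intro a b hab x hx y hy
    have hxcol : x.col = a + 1 := by
      obtain ⟨i0, _, hm⟩ := List.mem_flatMap.mp hx
      simp only [List.mem_cons, List.not_mem_nil, or_false] at hm
      rcases hm with rfl | rfl <;> rfl
    have hycol : y.col = b + 1 := by
      obtain ⟨i0, _, hm⟩ := List.mem_flatMap.mp hy
      simp only [List.mem_cons, List.not_mem_nil, or_false] at hm
      rcases hm with rfl | rfl <;> rfl
    exact Or.inl (by omega)

lemma rowPosList_pairwise (N M : ℕ) : (rowPosList N M).Pairwise rowBef := by
  refine pairwise_flatMap' (S := (· < ·)) (List.pairwise_lt_range (n := N)) ?_ ?_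
  · intro i0 _
    rw [List.pairwise_append]
    refine ⟨?_, ?_, ?_⟩
    · rw [List.pairwise_map, List.pairwise_reverse]
      refine (List.pairwise_lt_range (n := M)).imp ?_
      intro a b hab
      exact Or.inr ⟨rfl, by simp only [HPos.col]; omega⟩
    · rw [List.pairwise_map, List.pairwise_reverse]
      refine (List.pairwise_lt_range (n := M)).imp ?_
      intro a b hab
      exact Or.inr ⟨rfl, by simp only [HPos.col]; omega⟩
    · intro x hx y hy
      obtain ⟨j0, _, rfl⟩ := List.mem_map.mp hx
      obtain ⟨j0', _, rfl⟩ := List.mem_map.mp hy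
      exact Or.inl (by simp only [HPos.rowIdx]; omega)
  · intro a b hab x hx y hy
    have hxrow : x.rowIdx = 2*(a+1) ∨ x.rowIdx = 2*(a+1)+1 := by
      rcases List.mem_append.mp hx with h | h <;> obtain ⟨j0, _, rfl⟩ := List.mem_map.mp h
      · exact Or.inl rfl
      · exact Or.inr rfl
    have hyrow : y.rowIdx = 2*(b+1) ∨ y.rowIdx = 2*(b+1)+1 := by
      rcases List.mem_append.mp hy with h | h <;> obtain ⟨j0, _, rfl⟩ := List.mem_map.mp h
      · exact Or.inl rfl
      · exact Or.inr rfl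
    exact Or.inl (by omega)

lemma colPosList_nodup (N M : ℕ) : (colPosList N M).Nodup :=
  (colPosList_pairwise N M).imp fun {a b} h => by rintro rfl; exact colBef_irrefl a h

lemma rowPosList_nodup (N M : ℕ) : (rowPosList N M).Nodup :=
  (rowPosList_pairwise N M).imp fun {a b} h => by rintro rfl; exact rowBef_irrefl a h

variable {lam mu nu : SkewPartition} (T : EdgeTableau lam mu nu)

lemma valid_inGrid {p : HPos} (h : IsPos lam nu p) : inGrid nu.len (nu.part 1) p := by
  cases p with
  | box i j =>
    obtain ⟨h1, h2, h3⟩ := h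
    have hM : j ≤ nu.part 1 := le_trans h3 (nu.part_antitone h1)
    have hN : i ≤ nu.len := nu.le_len (le_trans (by omega : 1 ≤ j) h3)
    simp only [inGrid, HPos.col, HPos.rowIdx]
    omega
  | edge i j =>
    obtain ⟨h1, h2, h3, h4⟩ := h
    have hM : j ≤ nu.part 1 := le_trans h3 (nu.part_antitone h1)
    have hN : i ≤ nu.len := nu.le_len (le_trans h2 h3)
    simp only [inGrid, HPos.col, HPos.rowIdx]
    omega

end Orders
section Characterize

variable {lam mu nu : SkewPartition} (T : EdgeTableau lam mu nu)

lemma count_before {L L₁ L₂ : List HPos} {q : HPos} {Bef : HPos → HPos → Prop}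
    [DecidableRel Bef] (hpw : L.Pairwise Bef) (hirr : ∀ p, ¬ Bef p p)
    (hasym : ∀ p q : HPos, Bef p q → Bef q p → False)
    (hL : L = L₁ ++ q :: L₂) (m : ℕ) :
    (L₁.flatMap T.Wb).count m
      = (L.toFinset.filter fun p => T.HasLabel p m ∧ Bef p q).card := by
  have hnd : L.Nodup := hpw.imp fun {a b} h => by rintro rfl; exact hirr a h
  have hndL : (L₁ ++ q :: L₂).Nodup := hL ▸ hnd
  have hnd1 : L₁.Nodup := (List.nodup_append.mp hndL).1
  have hpw' : (L₁ ++ q :: L₂).Pairwise Bef := hL ▸ hpw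
  rw [List.pairwise_append] at hpw'
  have hL1f : L₁.toFinset = L.toFinset.filter (fun p => Bef p q) := by
    ext p
    simp only [List.mem_toFinset, Finset.mem_filter]
    constructor
    · intro hp
      exact ⟨by rw [hL]; exact List.mem_append_left _ hp,
        hpw'.2.2 p hp q (List.mem_cons_self)⟩
    · rintro ⟨hpL, hbef⟩
      rw [hL] at hpL
      rcases List.mem_append.mp hpL with h | h
      · exact h
      · rcases List.mem_cons.mp h with rfl | h2
        · exact absurd hbef (hirr p)
        · exact ((hasym p q hbef ((List.pairwise_cons.mp hpw'.2.1).1 p h2))).elim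
  rw [count_flat_nodup hnd1 T.Wb m (fun p => T.HasLabel p m) (fun a => Wb_count T a m), hL1f,
    Finset.filter_filter]
  congr 1
  apply Finset.filter_congr
  intro p _
  simp only [and_comm]

lemma card_split {L : List HPos} {q : HPos} {Bef : HPos → HPos → Prop}
    [DecidableRel Bef] (hirr : ∀ p, ¬ Bef p p) (hql : q ∈ L) (m : ℕ) :
    (L.toFinset.filter fun p => T.HasLabel p m ∧ (Bef p q ∨ p = q)).card
      = (L.toFinset.filter fun p => T.HasLabel p m ∧ Bef p q).card
        + (if T.HasLabel q m then 1 else 0) := by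
  have h1 : (L.toFinset.filter fun p => T.HasLabel p m ∧ (Bef p q ∨ p = q))
      = (L.toFinset.filter fun p => (T.HasLabel p m ∧ Bef p q) ∨ (T.HasLabel p m ∧ p = q)) := by
    apply Finset.filter_congr
    intro p _
    constructor
    · rintro ⟨h2, h3 | h3⟩
      · exact Or.inl ⟨h2, h3⟩
      · exact Or.inr ⟨h2, h3⟩
    · rintro (⟨h2, h3⟩ | ⟨h2, h3⟩)
      · exact ⟨h2, Or.inl h3⟩
      · exact ⟨h2, Or.inr h3⟩
  have hdisj : Disjoint (L.toFinset.filter fun p => T.HasLabel p m ∧ Bef p q)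
      (L.toFinset.filter fun p => T.HasLabel p m ∧ p = q) := by
    rw [Finset.disjoint_left]
    intro p hp1 hp2
    simp only [Finset.mem_filter] at hp1 hp2
    obtain ⟨-, -, rfl⟩ := hp2
    exact hirr p hp1.2.2
  have h2 : (L.toFinset.filter fun p => T.HasLabel p m ∧ p = q)
      = if T.HasLabel q m then {q} else ∅ := by
    split
    · rename_i hqm
      ext p
      simp only [Finset.mem_filter, List.mem_toFinset, Finset.mem_singleton]
      constructor
      · rintro ⟨-, -, rfl⟩; rfl
      · rintro rfl; exact ⟨hql, hqm, rfl⟩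
    · rename_i hqm
      ext p
      simp only [Finset.mem_filter, List.mem_toFinset, Finset.notMem_empty, iff_false]
      rintro ⟨-, hpm, rfl⟩
      exact hqm hpm
  rw [h1, Finset.filter_or, Finset.card_union_of_disjoint hdisj, h2]
  split <;> simp

lemma u2_counts {q : HPos} {u₂ v₂ : List ℕ} {k : ℕ} (hW : T.Wb q = u₂ ++ (k+1) :: v₂) :
    u₂.count (k+1) = 0 ∧ u₂.count k = (if T.HasLabel q k then 1 else 0) := by
  have hcut := sorted_cut (Wb_sorted T q) hW
  refine ⟨List.count_eq_zero.mpr (fun hmem' => lt_irrefl _ (hcut.1 _ hmem')), ?_⟩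
  have h1 : (T.Wb q).count k = u₂.count k + ((k+1) :: v₂).count k := by
    rw [hW, List.count_append]
  have h2 : ((k+1) :: v₂).count k = 0 := by
    apply List.count_eq_zero.mpr
    intro hmem'
    rcases List.mem_cons.mp hmem' with h | h
    · omega
    · have := hcut.2 _ h; omega
  rw [Wb_count] at h1
  by_cases hqk : T.HasLabel q k
  · simp only [hqk, if_true] at h1 ⊢; omega
  · simp only [hqk, if_false] at h1 ⊢; omega

lemma lattice_iff_counts {L : List HPos} {Bef : HPos → HPos → Prop} [DecidableRel Bef]
    (hpw : L.Pairwise Bef)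
    (hirr : ∀ p, ¬ Bef p p) (hasym : ∀ p q : HPos, Bef p q → Bef q p → False)
    (hmem : ∀ (p : HPos) (v : ℕ), T.HasLabel p v → p ∈ L) :
    IsLatticeWord (L.flatMap T.Wb) ↔
      ∀ k, 1 ≤ k → ∀ q, T.HasLabel q (k+1) →
        (L.toFinset.filter fun p => T.HasLabel p (k+1) ∧ (Bef p q ∨ p = q)).card ≤
          (L.toFinset.filter fun p => T.HasLabel p k ∧ (Bef p q ∨ p = q)).card := by
  unfold IsLatticeWord
  constructor
  · intro H k hk q hq
    have hql : q ∈ L := hmem q _ hq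
    obtain ⟨L₁, L₂, hL⟩ := List.append_of_mem hql
    obtain ⟨u₂, v₂, hW⟩ := List.append_of_mem ((Wb_mem T q (k+1)).mpr hq)
    have hw : L.flatMap T.Wb = (L₁.flatMap T.Wb ++ u₂) ++ (k+1) :: (v₂ ++ L₂.flatMap T.Wb) := by
      rw [hL, List.flatMap_append, List.flatMap_cons, hW]
      simp [List.append_assoc]
    have key := (lattice_pair_iff _ k).mp (H k hk) _ _ hw
    obtain ⟨hu1, hu2⟩ := u2_counts T hW
    rw [List.count_append, List.count_append, hu1, hu2,
      count_before T hpw hirr hasym hL (k+1), count_before T hpw hirr hasym hL k] at key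
    rw [card_split T hirr hql (k+1), card_split T hirr hql k]
    rw [if_pos hq]
    by_cases hqk : T.HasLabel q k
    · rw [if_pos hqk]; rw [if_pos hqk] at key; omega
    · rw [if_neg hqk]; rw [if_neg hqk] at key; omega
  · intro H k hk
    rw [lattice_pair_iff]
    intro u v hsplit
    obtain ⟨L₁, a, L₂, u₂, v₂, hL, hW, hu⟩ := flatMap_split hsplit
    have hqa : T.HasLabel a (k+1) := (Wb_mem T a (k+1)).mp
      (by rw [hW]; exact List.mem_append_right _ (List.mem_cons_self))
    have hal : a ∈ L := by rw [hL]; exact List.mem_append_right _ (List.mem_cons_self)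
    have key := H k hk a hqa
    obtain ⟨hu1, hu2⟩ := u2_counts T hW
    rw [card_split T hirr hal (k+1), card_split T hirr hal k, if_pos hqa] at key
    rw [hu, List.count_append, List.count_append, hu1, hu2,
      count_before T hpw hirr hasym hL (k+1), count_before T hpw hirr hasym hL k]
    by_cases hqk : T.HasLabel a k
    · rw [if_pos hqk]; rw [if_pos hqk] at key; omega
    · rw [if_neg hqk]; rw [if_neg hqk] at key; omega

/-- Characterization of latticeness of the column word by counts. -/
lemma wc_lattice_iff :
    IsLatticeWord T.wc ↔
      ∀ k, 1 ≤ k → ∀ q, T.HasLabel q (k+1) →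
        ((colPosList nu.len (nu.part 1)).toFinset.filter
            fun p => T.HasLabel p (k+1) ∧ (colBef p q ∨ p = q)).card ≤
          ((colPosList nu.len (nu.part 1)).toFinset.filter
            fun p => T.HasLabel p k ∧ (colBef p q ∨ p = q)).card := by
  rw [wc_eq]
  exact lattice_iff_counts T (colPosList_pairwise _ _) colBef_irrefl
    (fun _ _ => colBef_asymm)
    (fun p v h => mem_colPosList.mpr (valid_inGrid (hasLabel_valid T h)))

/-- Characterization of latticeness of the row word by counts. -/
lemma wr_lattice_iff :
    IsLatticeWord T.wr ↔
      ∀ k, 1 ≤ k → ∀ q, T.HasLabel q (k+1) →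
        ((rowPosList nu.len (nu.part 1)).toFinset.filter
            fun p => T.HasLabel p (k+1) ∧ (rowBef p q ∨ p = q)).card ≤
          ((rowPosList nu.len (nu.part 1)).toFinset.filter
            fun p => T.HasLabel p k ∧ (rowBef p q ∨ p = q)).card := by
  rw [wr_eq]
  exact lattice_iff_counts T (rowPosList_pairwise _ _) rowBef_irrefl
    (fun _ _ => rowBef_asymm)
    (fun p v h => mem_rowPosList.mpr (valid_inGrid (hasLabel_valid T h)))

end Characterize
section Combinatorics

variable {lam mu nu : SkewPartition} (T : EdgeTableau lam mu nu)

lemma rowLE_iff (z q : HPos) :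
    (rowBef z q ∨ z = q) ↔ (z.rowIdx < q.rowIdx ∨ (z.rowIdx = q.rowIdx ∧ q.col ≤ z.col)) := by
  constructor
  · rintro (h | rfl)
    · rcases h with h | ⟨he, hc⟩
      · exact Or.inl h
      · exact Or.inr ⟨he, hc.le⟩
    · exact Or.inr ⟨rfl, le_refl _⟩
  · rintro (h | ⟨he, hc⟩)
    · exact Or.inl (Or.inl h)
    · rcases eq_or_lt_of_le hc with heq | hlt
      · exact Or.inr (HPos.eq_of_idx he heq.symm)
      · exact Or.inl (Or.inr ⟨he, hlt⟩)

lemma colLE_iff (z q : HPos) :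
    (colBef z q ∨ z = q) ↔ (q.col < z.col ∨ (z.col = q.col ∧ z.rowIdx ≤ q.rowIdx)) := by
  constructor
  · rintro (h | rfl)
    · rcases h with h | ⟨he, hc⟩
      · exact Or.inl h
      · exact Or.inr ⟨he, hc.le⟩
    · exact Or.inr ⟨rfl, le_refl _⟩
  · rintro (h | ⟨he, hc⟩)
    · exact Or.inl (Or.inl h)
    · rcases eq_or_lt_of_le hc with heq | hlt
      · exact Or.inr (HPos.eq_of_idx heq he)
      · exact Or.inl (Or.inr ⟨he, hlt⟩)

/-- Column lattice condition implies row lattice condition. -/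
lemma colCond_to_rowCond
    (h : ∀ k, 1 ≤ k → ∀ q, T.HasLabel q (k+1) →
      ((colPosList nu.len (nu.part 1)).toFinset.filter
          fun p => T.HasLabel p (k+1) ∧ (colBef p q ∨ p = q)).card ≤
        ((colPosList nu.len (nu.part 1)).toFinset.filter
          fun p => T.HasLabel p k ∧ (colBef p q ∨ p = q)).card) :
    ∀ k, 1 ≤ k → ∀ q, T.HasLabel q (k+1) →
      ((colPosList nu.len (nu.part 1)).toFinset.filter
          fun p => T.HasLabel p (k+1) ∧ (rowBef p q ∨ p = q)).card ≤
        ((colPosList nu.len (nu.part 1)).toFinset.filter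
          fun p => T.HasLabel p k ∧ (rowBef p q ∨ p = q)).card := by
  intro k hk p hp
  set G := (colPosList nu.len (nu.part 1)).toFinset with hG
  have hmemG : ∀ (z : HPos) (v : ℕ), T.HasLabel z v → z ∈ G := fun z v hz =>
    List.mem_toFinset.mpr (mem_colPosList.mpr (valid_inGrid (hasLabel_valid T hz)))
  set Sy := G.filter (fun z => T.HasLabel z (k+1) ∧ (rowBef z p ∨ z = p)) with hSy
  have hpS : p ∈ Sy := Finset.mem_filter.mpr ⟨hmemG p _ hp, hp, Or.inr rfl⟩
  obtain ⟨q, hqS, hqmin⟩ := Finset.exists_min_image Sy (fun z => z.col) ⟨p, hpS⟩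
  obtain ⟨-, hqlab, hqrow⟩ := Finset.mem_filter.mp hqS
  -- Sy ⊆ positions col-before q
  have hA : Sy ⊆ G.filter (fun z => T.HasLabel z (k+1) ∧ (colBef z q ∨ z = q)) := by
    intro z hz
    obtain ⟨hzG, hzlab, -⟩ := Finset.mem_filter.mp hz
    refine Finset.mem_filter.mpr ⟨hzG, hzlab, ?_⟩
    rcases eq_or_ne z q with rfl | hne
    · exact Or.inr rfl
    · have hcol : q.col ≤ z.col := hqmin z hz
      rcases eq_or_lt_of_le hcol with heq | hlt
      · exact absurd (label_unique_col T hzlab hqlab heq.symm) hne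
      · exact Or.inl (Or.inl hlt)
  have hB : G.filter (fun z => T.HasLabel z k ∧ (colBef z q ∨ z = q)) ⊆
      G.filter (fun z => T.HasLabel z k ∧ (rowBef z p ∨ z = p)) := by
    intro x hx
    obtain ⟨hxG, hxlab, hxcb⟩ := Finset.mem_filter.mp hx
    refine Finset.mem_filter.mpr ⟨hxG, hxlab, ?_⟩
    have hxq : (q.col < x.col ∨ (x.col = q.col ∧ x.rowIdx ≤ q.rowIdx)) :=
      (colLE_iff x q).mp hxcb
    have hcolle : q.col ≤ x.col := by rcases hxq with h' | ⟨h', -⟩ <;> omega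
    have hrowle : x.rowIdx ≤ q.rowIdx := staircase T hqlab hxlab (by omega) hcolle
    have hqp : (q.rowIdx < p.rowIdx ∨ (q.rowIdx = p.rowIdx ∧ p.col ≤ q.col)) :=
      (rowLE_iff q p).mp hqrow
    apply (rowLE_iff x p).mpr
    rcases hqp with h' | ⟨h1, h2⟩
    · exact Or.inl (by omega)
    · rcases eq_or_lt_of_le (le_trans (by omega : x.rowIdx ≤ p.rowIdx) (le_refl _)) with
        heq | hlt
      · exact Or.inr ⟨heq, by omega⟩
      · exact Or.inl hlt
  calc Sy.card ≤ _ := Finset.card_le_card hA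
    _ ≤ _ := h k hk q hqlab
    _ ≤ _ := Finset.card_le_card hB

end Combinatorics
section HardDirection

variable {lam mu nu : SkewPartition} (T : EdgeTableau lam mu nu)

/-- Row lattice condition implies column lattice condition. -/
lemma rowCond_to_colCond
    (h : ∀ k, 1 ≤ k → ∀ q, T.HasLabel q (k+1) →
      ((colPosList nu.len (nu.part 1)).toFinset.filter
          fun p => T.HasLabel p (k+1) ∧ (rowBef p q ∨ p = q)).card ≤
        ((colPosList nu.len (nu.part 1)).toFinset.filter
          fun p => T.HasLabel p k ∧ (rowBef p q ∨ p = q)).card) :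
    ∀ k, 1 ≤ k → ∀ q, T.HasLabel q (k+1) →
      ((colPosList nu.len (nu.part 1)).toFinset.filter
          fun p => T.HasLabel p (k+1) ∧ (colBef p q ∨ p = q)).card ≤
        ((colPosList nu.len (nu.part 1)).toFinset.filter
          fun p => T.HasLabel p k ∧ (colBef p q ∨ p = q)).card := by
  intro k hk q0 hq0
  by_contra hcon
  push_neg at hcon
  set G := (colPosList nu.len (nu.part 1)).toFinset with hGdef
  have hmemG : ∀ (z : HPos) (v : ℕ), T.HasLabel z v → z ∈ G := fun z v hz =>
    List.mem_toFinset.mpr (mem_colPosList.mpr (valid_inGrid (hasLabel_valid T hz)))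
  -- the set of failures; pick one with maximal column
  set Fail := G.filter (fun z => T.HasLabel z (k+1) ∧
    (G.filter fun p => T.HasLabel p k ∧ (colBef p z ∨ p = z)).card <
      (G.filter fun p => T.HasLabel p (k+1) ∧ (colBef p z ∨ p = z)).card) with hFail
  have hne : Fail.Nonempty := ⟨q0, Finset.mem_filter.mpr ⟨hmemG q0 _ hq0, hq0, hcon⟩⟩
  obtain ⟨q, hqF, hqmax⟩ := Finset.exists_max_image Fail (fun z => z.col) hne
  obtain ⟨hqG, hq, hfail⟩ := Finset.mem_filter.mp hqF
  clear hcon hq0 hne hqF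
  -- right regions
  set XR := G.filter (fun z => T.HasLabel z k ∧ q.col < z.col) with hXR
  set YR := G.filter (fun z => T.HasLabel z (k+1) ∧ q.col < z.col) with hYR
  have hYcard : (G.filter fun p => T.HasLabel p (k+1) ∧ (colBef p q ∨ p = q)).card
      = YR.card + 1 := by
    have hset : (G.filter fun p => T.HasLabel p (k+1) ∧ (colBef p q ∨ p = q))
        = insert q YR := by
      ext z
      constructor
      · intro hz
        obtain ⟨hzG, hzl, hzc⟩ := Finset.mem_filter.mp hz
        apply Finset.mem_insert.mpr
        rcases (colLE_iff z q).mp hzc with h1 | ⟨h1, h2⟩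
        · exact Or.inr (Finset.mem_filter.mpr ⟨hzG, hzl, h1⟩)
        · exact Or.inl (label_unique_col T hzl hq h1)
      · intro hz
        rcases Finset.mem_insert.mp hz with rfl | hzY
        · exact Finset.mem_filter.mpr ⟨hqG, hq, Or.inr rfl⟩
        · obtain ⟨hzG, hzl, hzc⟩ := Finset.mem_filter.mp hzY
          exact Finset.mem_filter.mpr ⟨hzG, hzl, Or.inl (Or.inl hzc)⟩
    rw [hset, Finset.card_insert_of_notMem]
    intro hmem'
    exact absurd (Finset.mem_filter.mp hmem').2.2 (lt_irrefl _)
  have hXsub : XR ⊆ G.filter (fun p => T.HasLabel p k ∧ (colBef p q ∨ p = q)) := by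
    intro z hz
    obtain ⟨hzG, hzl, hzc⟩ := Finset.mem_filter.mp hz
    exact Finset.mem_filter.mpr ⟨hzG, hzl, Or.inl (Or.inl hzc)⟩
  have hcolc : ∀ z, T.HasLabel z k → z.col = q.col →
      z ∈ G.filter (fun p => T.HasLabel p k ∧ (colBef p q ∨ p = q)) := by
    intro z hzl hzc
    have hler : z.rowIdx ≤ q.rowIdx := by
      by_contra hgt
      have := label_lt_of_SE T hq hzl (le_of_eq hzc.symm) (by omega)
      omega
    exact Finset.mem_filter.mpr ⟨hmemG z _ hzl, hzl,
      (colLE_iff z q).mpr (Or.inr ⟨hzc, hler⟩)⟩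
  -- (i) no k in the column of q, (ii) equal counts on the right
  have hkey : (∀ z, T.HasLabel z k → z.col ≠ q.col) ∧ YR.card = XR.card := by
    rcases YR.eq_empty_or_nonempty with hYe | hYne
    · have h1 : (G.filter fun p => T.HasLabel p (k+1) ∧ (colBef p q ∨ p = q)).card = 1 := by
        rw [hYcard, hYe]; simp
      have hemp : (G.filter fun p => T.HasLabel p k ∧ (colBef p q ∨ p = q)) = ∅ :=
        Finset.card_eq_zero.mp (by omega)
      constructor
      · intro z hzl hzc
        have := hcolc z hzl hzc
        rw [hemp] at this
        exact absurd this (Finset.notMem_empty z)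
      · have hXe : XR = ∅ := Finset.subset_empty.mp (hemp ▸ hXsub)
        rw [hYe, hXe]
    · obtain ⟨q₂, hq₂Y, hq₂min⟩ := Finset.exists_min_image YR (fun z => z.col) hYne
      obtain ⟨hq₂G, hq₂lab, hq₂gt⟩ := Finset.mem_filter.mp hq₂Y
      have hq₂cond : (G.filter fun p => T.HasLabel p (k+1) ∧ (colBef p q₂ ∨ p = q₂)).card ≤
          (G.filter fun p => T.HasLabel p k ∧ (colBef p q₂ ∨ p = q₂)).card := by
        by_contra hno
        push_neg at hno
        have hin : q₂ ∈ Fail := Finset.mem_filter.mpr ⟨hq₂G, hq₂lab, hno⟩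
        have := hqmax q₂ hin
        omega
      have hYq₂ : (G.filter fun p => T.HasLabel p (k+1) ∧ (colBef p q₂ ∨ p = q₂)) = YR := by
        ext z
        constructor
        · intro hz
          obtain ⟨hzG, hzl, hzc⟩ := Finset.mem_filter.mp hz
          refine Finset.mem_filter.mpr ⟨hzG, hzl, ?_⟩
          rcases (colLE_iff z q₂).mp hzc with h1 | ⟨h1, h2⟩
          · omega
          · omega
        · intro hz
          obtain ⟨hzG, hzl, hzc⟩ := Finset.mem_filter.mp hz
          refine Finset.mem_filter.mpr ⟨hzG, hzl, ?_⟩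
          have hge : q₂.col ≤ z.col := hq₂min z (Finset.mem_filter.mpr ⟨hzG, hzl, hzc⟩)
          rcases eq_or_lt_of_le hge with heq | hlt
          · exact Or.inr (label_unique_col T hzl hq₂lab heq.symm)
          · exact Or.inl (Or.inl hlt)
      have hXq₂sub : (G.filter fun p => T.HasLabel p k ∧ (colBef p q₂ ∨ p = q₂)) ⊆ XR := by
        intro z hz
        obtain ⟨hzG, hzl, hzc⟩ := Finset.mem_filter.mp hz
        refine Finset.mem_filter.mpr ⟨hzG, hzl, ?_⟩
        rcases (colLE_iff z q₂).mp hzc with h1 | ⟨h1, -⟩ <;> omega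
      have hchain : YR.card ≤ XR.card := by
        calc YR.card = _ := (congrArg Finset.card hYq₂).symm
          _ ≤ _ := hq₂cond
          _ ≤ XR.card := Finset.card_le_card hXq₂sub
      have hXle := Finset.card_le_card hXsub
      have heqset : (G.filter fun p => T.HasLabel p k ∧ (colBef p q ∨ p = q)) = XR :=
        (Finset.eq_of_subset_of_card_le hXsub (by omega)).symm
      constructor
      · intro z hzl hzc
        have hzin := hcolc z hzl hzc
        rw [heqset] at hzin
        have := (Finset.mem_filter.mp hzin).2.2
        omega
      · omega
  obtain ⟨hnoc, hn⟩ := hkey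
  -- row-prefix decomposition
  have hrowsplit : ∀ (q' : HPos) (m : ℕ),
      (G.filter fun p => T.HasLabel p m ∧ (rowBef p q' ∨ p = q')).card
        = (G.filter fun p => T.HasLabel p m ∧ p.rowIdx < q'.rowIdx).card
          + (G.filter fun p => T.HasLabel p m ∧ (p.rowIdx = q'.rowIdx ∧ q'.col ≤ p.col)).card := by
    intro q' m
    have h1 : (G.filter fun p => T.HasLabel p m ∧ (rowBef p q' ∨ p = q'))
        = G.filter (fun p => T.HasLabel p m ∧
            (p.rowIdx < q'.rowIdx ∨ (p.rowIdx = q'.rowIdx ∧ q'.col ≤ p.col))) := by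
      apply Finset.filter_congr
      intro z _
      exact and_congr_right fun _ => rowLE_iff z q'
    rw [h1]
    exact card_filter_or_disjoint G _ _ _ (fun z ha hb => by omega)
  -- strata at q
  set Xlt := G.filter (fun z => T.HasLabel z k ∧ z.rowIdx < q.rowIdx) with hXlt
  set Ylt := G.filter (fun z => T.HasLabel z (k+1) ∧ z.rowIdx < q.rowIdx) with hYlt
  set XltR := G.filter (fun z => (T.HasLabel z k ∧ z.rowIdx < q.rowIdx) ∧ q.col < z.col) with hXltR
  set XNW := G.filter (fun z => (T.HasLabel z k ∧ z.rowIdx < q.rowIdx) ∧ z.col < q.col) with hXNW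
  set YltR := G.filter (fun z => (T.HasLabel z (k+1) ∧ z.rowIdx < q.rowIdx) ∧ q.col < z.col) with hYltR
  set YNW := G.filter (fun z => (T.HasLabel z (k+1) ∧ z.rowIdx < q.rowIdx) ∧ z.col < q.col) with hYNW
  set Xeq2 := G.filter (fun z => T.HasLabel z k ∧ (z.rowIdx = q.rowIdx ∧ q.col < z.col)) with hXeq2
  set Yeq2 := G.filter (fun z => T.HasLabel z (k+1) ∧ (z.rowIdx = q.rowIdx ∧ q.col < z.col)) with hYeq2
  have f1 : Xlt.card = XltR.card + XNW.card := by
    rw [hXlt, hXltR, hXNW,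
      card_filter_split G (fun z => T.HasLabel z k ∧ z.rowIdx < q.rowIdx)
        (fun z => q.col < z.col)]
    congr 1
    apply congrArg Finset.card
    apply Finset.filter_congr
    intro z _
    constructor
    · rintro ⟨hA, hng⟩
      refine ⟨hA, ?_⟩
      have := hnoc z hA.1
      omega
    · rintro ⟨hA, hlt⟩
      exact ⟨hA, by omega⟩
  have f2 : Ylt.card = YltR.card + YNW.card := by
    rw [hYlt, hYltR, hYNW,
      card_filter_split G (fun z => T.HasLabel z (k+1) ∧ z.rowIdx < q.rowIdx)
        (fun z => q.col < z.col)]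
    congr 1
    apply congrArg Finset.card
    apply Finset.filter_congr
    intro z _
    constructor
    · rintro ⟨hA, hng⟩
      refine ⟨hA, ?_⟩
      rcases lt_or_eq_of_le (by omega : z.col ≤ q.col) with hlt | heq
      · exact hlt
      · have hz := label_unique_col T hA.1 hq heq
        rw [hz] at hA
        exact absurd hA.2 (lt_irrefl _)
    · rintro ⟨hA, hlt⟩
      exact ⟨hA, by omega⟩
  have f3 : (G.filter fun z => T.HasLabel z (k+1) ∧ (z.rowIdx = q.rowIdx ∧ q.col ≤ z.col)).card
      = Yeq2.card + 1 := by
    have hset : (G.filter fun z => T.HasLabel z (k+1) ∧ (z.rowIdx = q.rowIdx ∧ q.col ≤ z.col))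
        = insert q Yeq2 := by
      ext z
      constructor
      · intro hz
        obtain ⟨hzG, hzl, hzr, hzc⟩ := Finset.mem_filter.mp hz
        apply Finset.mem_insert.mpr
        rcases eq_or_lt_of_le hzc with heq | hlt
        · exact Or.inl (HPos.eq_of_idx hzr heq.symm)
        · exact Or.inr (Finset.mem_filter.mpr ⟨hzG, hzl, hzr, hlt⟩)
      · intro hz
        rcases Finset.mem_insert.mp hz with rfl | hzY
        · exact Finset.mem_filter.mpr ⟨hqG, hq, rfl, le_refl _⟩
        · obtain ⟨hzG, hzl, hzr, hzc⟩ := Finset.mem_filter.mp hzY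
          exact Finset.mem_filter.mpr ⟨hzG, hzl, hzr, hzc.le⟩
    rw [hset, Finset.card_insert_of_notMem]
    intro hmem'
    exact absurd (Finset.mem_filter.mp hmem').2.2.2 (lt_irrefl _)
  have f7 : (G.filter fun z => T.HasLabel z k ∧ (z.rowIdx = q.rowIdx ∧ q.col ≤ z.col)).card
      = Xeq2.card := by
    rw [hXeq2]
    apply congrArg Finset.card
    apply Finset.filter_congr
    intro z _
    constructor
    · rintro ⟨hzl, hzr, hzc⟩
      have := hnoc z hzl
      exact ⟨hzl, hzr, by omega⟩
    · rintro ⟨hzl, hzr, hzc⟩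
      exact ⟨hzl, hzr, hzc.le⟩
  have f5 : YR.card = YltR.card + Yeq2.card := by
    rw [hYR, hYltR, hYeq2,
      card_filter_split G (fun z => T.HasLabel z (k+1) ∧ q.col < z.col)
        (fun z => z.rowIdx < q.rowIdx)]
    congr 1
    · apply congrArg Finset.card
      apply Finset.filter_congr
      intro z _
      constructor
      · rintro ⟨⟨h1, h2⟩, h3⟩
        exact ⟨⟨h1, h3⟩, h2⟩
      · rintro ⟨⟨h1, h3⟩, h2⟩
        exact ⟨⟨h1, h2⟩, h3⟩
    · apply congrArg Finset.card
      apply Finset.filter_congr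
      intro z _
      constructor
      · rintro ⟨⟨h1, h2⟩, h3⟩
        have hle : z.rowIdx ≤ q.rowIdx := staircase T hq h1 (le_refl _) h2.le
        exact ⟨h1, by omega, h2⟩
      · rintro ⟨h1, h2, h3⟩
        exact ⟨⟨h1, h3⟩, by omega⟩
  have f6 : XR.card = XltR.card + Xeq2.card := by
    rw [hXR, hXltR, hXeq2,
      card_filter_split G (fun z => T.HasLabel z k ∧ q.col < z.col)
        (fun z => z.rowIdx < q.rowIdx)]
    congr 1
    · apply congrArg Finset.card
      apply Finset.filter_congr
      intro z _
      constructor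
      · rintro ⟨⟨h1, h2⟩, h3⟩
        exact ⟨⟨h1, h3⟩, h2⟩
      · rintro ⟨⟨h1, h3⟩, h2⟩
        exact ⟨⟨h1, h2⟩, h3⟩
    · apply congrArg Finset.card
      apply Finset.filter_congr
      intro z _
      constructor
      · rintro ⟨⟨h1, h2⟩, h3⟩
        have hle : z.rowIdx ≤ q.rowIdx := staircase T hq h1 (by omega) h2.le
        exact ⟨h1, by omega, h2⟩
      · rintro ⟨h1, h2, h3⟩
        exact ⟨⟨h1, h3⟩, by omega⟩
  have hrowq := h k hk q hq
  rw [hrowsplit q (k+1), hrowsplit q k, f3, f7] at hrowq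
  -- hence there is a k strictly northwest of q
  have hXNWpos : YNW.card + 1 ≤ XNW.card := by
    rw [f5, f6] at hn
    rw [← hXlt, ← hYlt] at hrowq
    omega
  obtain ⟨x, hxX⟩ : XNW.Nonempty := Finset.card_pos.mp (by omega)
  obtain ⟨hxG, ⟨hxlab, hxrow⟩, hxcol⟩ := Finset.mem_filter.mp hxX
  obtain ⟨i₁, hxe, hqe, hseg⟩ := nw_classification T hq hxlab hxcol hxrow hnoc
  set i₂ := i₁ + 1 with hi₂
  have hr : q.rowIdx = 2 * i₂ := by rw [hqe]; rfl
  -- the interval of k+1 boxes in row i₂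
  set Dfull := (Finset.Icc 1 (nu.part 1)).filter
    (fun d => IsBox lam nu i₂ d ∧ T.box i₂ d = k+1) with hDfull
  have hDmem : ∀ d, IsBox lam nu i₂ d → T.box i₂ d = k+1 → d ∈ Dfull := by
    intro d hb hv
    refine Finset.mem_filter.mpr ⟨Finset.mem_Icc.mpr ⟨hb.one_le_col, ?_⟩, hb, hv⟩
    exact le_trans hb.2.2 (nu.part_antitone hb.1)
  have hqbox : IsBox lam nu i₂ q.col ∧ T.box i₂ q.col = k+1 := by
    rw [hqe] at hq; exact ⟨hq.1, hq.2⟩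
  have hcD : q.col ∈ Dfull := hDmem _ hqbox.1 hqbox.2
  have hDne : Dfull.Nonempty := ⟨q.col, hcD⟩
  set c₀ := Dfull.min' hDne with hc₀
  set Cs := Dfull.max' hDne with hCs
  have hc₀c : c₀ ≤ q.col := Finset.min'_le _ _ hcD
  have hcCs : q.col ≤ Cs := Finset.le_max' _ _ hcD
  have hint : ∀ d, c₀ ≤ d → d ≤ Cs → IsBox lam nu i₂ d ∧ T.box i₂ d = k+1 := by
    intro d hd1 hd2
    obtain ⟨hI0, hb0, hv0⟩ := Finset.mem_filter.mp (Dfull.min'_mem hDne)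
    obtain ⟨hI1, hb1, hv1⟩ := Finset.mem_filter.mp (Dfull.max'_mem hDne)
    have hbd : IsBox lam nu i₂ d := ⟨by omega, by have := hb0.2.1; omega, le_trans hd2 hb1.2.2⟩
    refine ⟨hbd, le_antisymm ?_ ?_⟩
    · have := box_row_mono T hbd hb1 hd2
      omega
    · have := box_row_mono T hb0 hbd hd1
      omega
  -- every position at the row index of q is a box in row i₂
  have hboxrow : ∀ z : HPos, z.rowIdx = q.rowIdx → z = HPos.box i₂ z.col := by
    intro z hz
    rw [hr] at hz
    cases z with
    | box i j =>
      simp only [HPos.rowIdx] at hz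
      have : i = i₂ := by omega
      rw [this]; rfl
    | edge i j => simp only [HPos.rowIdx] at hz; omega
  -- counting the k+1 boxes of row i₂
  set p₀ := HPos.box i₂ c₀ with hp₀def
  have hp₀ : T.HasLabel p₀ (k+1) := by
    obtain ⟨hb, hv⟩ := hint c₀ le_rfl (le_trans hc₀c hcCs)
    exact ⟨hb, hv⟩
  have hp₀r : p₀.rowIdx = q.rowIdx := by rw [hr]; rfl
  have hp₀c : p₀.col = c₀ := rfl
  have hYeq0 : (G.filter fun z => T.HasLabel z (k+1) ∧ (z.rowIdx = p₀.rowIdx ∧ p₀.col ≤ z.col)).card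
      = (Finset.Icc c₀ Cs).card := by
    apply Finset.card_bij' (i := fun z _ => z.col) (j := fun d _ => HPos.box i₂ d)
    · intro z hz
      obtain ⟨hzG, hzl, hzr, hzc⟩ := Finset.mem_filter.mp hz
      have hzb : z = HPos.box i₂ z.col := hboxrow z (by rw [← hp₀r]; exact hzr)
      rw [hzb] at hzl
      have hD := hDmem _ hzl.1 hzl.2
      exact Finset.mem_Icc.mpr ⟨hzc, Finset.le_max' _ _ hD⟩
    · intro d hd
      obtain ⟨hd1, hd2⟩ := Finset.mem_Icc.mp hd
      obtain ⟨hb, hv⟩ := hint d hd1 hd2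
      refine Finset.mem_filter.mpr ⟨hmemG _ _ ⟨hb, hv⟩, ⟨hb, hv⟩, ?_, ?_⟩
      · rw [hp₀r, hr]
        rfl
      · exact hd1
    · intro z hz
      obtain ⟨hzG, hzl, hzr, hzc⟩ := Finset.mem_filter.mp hz
      exact (hboxrow z (by rw [← hp₀r]; exact hzr)).symm
    · intro d hd
      rfl
  have hXeq0 : (G.filter fun z => T.HasLabel z k ∧ (z.rowIdx = p₀.rowIdx ∧ p₀.col ≤ z.col)).card
      = 0 := by
    rw [Finset.card_eq_zero, Finset.filter_eq_empty_iff]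
    rintro z hzG ⟨hzl, hzr, hzc⟩
    have hzb : z = HPos.box i₂ z.col := hboxrow z (by rw [← hp₀r]; exact hzr)
    rw [hzb] at hzl
    obtain ⟨hbz, hvz⟩ := hzl
    rcases le_or_gt z.col Cs with hle | hgt
    · have := (hint z.col hzc hle).2
      omega
    · obtain ⟨-, hbCs, hvCs⟩ := Finset.mem_filter.mp (Dfull.max'_mem hDne)
      have := box_row_mono T hbCs hbz hgt.le
      omega
  have hrowp₀ := h k hk p₀ hp₀
  rw [hrowsplit p₀ (k+1), hrowsplit p₀ k, hYeq0, hXeq0] at hrowp₀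
  have hstar : Ylt.card + (Finset.Icc c₀ Cs).card ≤ Xlt.card := by
    have e1 : (G.filter fun z => T.HasLabel z (k+1) ∧ z.rowIdx < p₀.rowIdx) = Ylt := by
      rw [hYlt]; apply Finset.filter_congr; intro z _; rw [hp₀r]
    have e2 : (G.filter fun z => T.HasLabel z k ∧ z.rowIdx < p₀.rowIdx) = Xlt := by
      rw [hXlt]; apply Finset.filter_congr; intro z _; rw [hp₀r]
    rw [e1, e2] at hrowp₀
    omega
  have hXNWA : XNW.card ≤ (Finset.Ico c₀ q.col).card := by
    apply Finset.card_le_card_of_injOn (fun z => z.col)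
    · intro z hz
      obtain ⟨hzG, ⟨hzl, hzr⟩, hzc⟩ := Finset.mem_filter.mp hz
      obtain ⟨i₁', hze', hqe', hseg'⟩ := nw_classification T hq hzl hzc hzr hnoc
      have hii : i₁' + 1 = i₂ := by
        have h12 := hqe.symm.trans hqe'
        injection h12 with h1 h2
        omega
      obtain ⟨hbz, hvz⟩ := hseg' z.col le_rfl hzc.le
      rw [hii] at hbz hvz
      have hD := hDmem _ hbz hvz
      exact Finset.mem_Ico.mpr ⟨Finset.min'_le _ _ hD, hzc⟩
    · intro z hz z' hz' heq
      exact label_unique_col T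
        ((Finset.mem_filter.mp (Finset.mem_coe.mp hz)).2.1.1)
        ((Finset.mem_filter.mp (Finset.mem_coe.mp hz')).2.1.1) heq
  have hYeq2B : Yeq2.card = (Finset.Ioc q.col Cs).card := by
    apply Finset.card_bij' (i := fun z _ => z.col) (j := fun d _ => HPos.box i₂ d)
    · intro z hz
      obtain ⟨hzG, hzl, hzr, hzc⟩ := Finset.mem_filter.mp hz
      have hzb : z = HPos.box i₂ z.col := hboxrow z hzr
      rw [hzb] at hzl
      have hD := hDmem _ hzl.1 hzl.2
      exact Finset.mem_Ioc.mpr ⟨hzc, Finset.le_max' _ _ hD⟩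
    · intro d hd
      obtain ⟨hd1, hd2⟩ := Finset.mem_Ioc.mp hd
      obtain ⟨hb, hv⟩ := hint d (by omega) hd2
      refine Finset.mem_filter.mpr ⟨hmemG _ _ ⟨hb, hv⟩, ⟨hb, hv⟩, ?_, ?_⟩
      · rw [hr]
        rfl
      · exact hd1
    · intro z hz
      obtain ⟨hzG, hzl, hzr, hzc⟩ := Finset.mem_filter.mp hz
      exact (hboxrow z hzr).symm
    · intro d hd
      rfl
  have hXeq2z : Xeq2.card = 0 := by
    rw [Finset.card_eq_zero, hXeq2, Finset.filter_eq_empty_iff]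
    rintro z hzG ⟨hzl, hzr, hzc⟩
    have hzb : z = HPos.box i₂ z.col := hboxrow z hzr
    rw [hzb] at hzl
    obtain ⟨hbz, hvz⟩ := hzl
    rcases le_or_gt z.col Cs with hle | hgt
    · have := (hint z.col (by omega) hle).2
      omega
    · obtain ⟨-, hbCs, hvCs⟩ := Finset.mem_filter.mp (Dfull.max'_mem hDne)
      have := box_row_mono T hbCs hbz hgt.le
      omega
  have hIcc : (Finset.Icc c₀ Cs).card
      = (Finset.Ico c₀ q.col).card + ((Finset.Ioc q.col Cs).card + 1) := by
    rw [Nat.card_Icc, Nat.card_Ico, Nat.card_Ioc]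
    omega
  rw [f5, f6] at hn
  omega

end HardDirection

/-- **Theorem 2.2 (reading order independence).** Let `λ ⊆ ν` and `μ` be
partitions and `T` an edge-labeled tableau of shape `ν/λ` and content `μ`
(the containment `λ ⊆ ν` is the field `T.subset`). Then the column reading
word `w_c(T)` is lattice iff the row reading word `w_r(T)` is lattice. -/
theorem reading_order_independence (lam mu nu : SkewPartition)
    (T : EdgeTableau lam mu nu) :
    IsLatticeWord T.wc ↔ IsLatticeWord T.wr := by
  rw [wc_lattice_iff T, wr_lattice_iff T]
  have hGeq : (rowPosList nu.len (nu.part 1)).toFinset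
      = (colPosList nu.len (nu.part 1)).toFinset := by
    ext p
    simp only [List.mem_toFinset]
    rw [mem_rowPosList, mem_colPosList]
  rw [hGeq]
  constructor
  · exact colCond_to_rowCond T
  · exact rowCond_to_colCond T
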